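/- arXiv:1406.3408 — 2 statements merged into one kernel-verified Lean document; each statement's English description precedes it below -/
import Mathlib

section
/- There exists a sequence of finite simple graphs (G_n)_{n ≥ 1} with sup_{n ≥ 1} Δ(G_n) = ∞, and a function f : ℝ → ℝ given by an everywhere-convergent power series f(x) = Σ_{k=0}^∞ a_k x^k that is not absolutely monotonic (i.e. a_k < 0 for at least one k), such that f_{G_n}[A] ∈ P_{G_n} for every n ≥ 1 and every A ∈ P_{G_n}([0,∞)). -/
open Matrix
open scoped Classical ENNReal

/-- `A` has zeros according to the graph `G`: off-diagonal entries at non-edges vanish. -/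
def sparsePattern {n : ℕ} (G : SimpleGraph (Fin n)) (A : Matrix (Fin n) (Fin n) ℝ) : Prop :=
  ∀ i j, i ≠ j → ¬ G.Adj i j → A i j = 0

/-- `A ∈ P_G(I)`: `A` is positive semidefinite, has entries in `I`,
and has zeros according to `G`. -/
def memPG {n : ℕ} (G : SimpleGraph (Fin n)) (I : Set ℝ) (A : Matrix (Fin n) (Fin n) ℝ) : Prop :=
  A.PosSemidef ∧ (∀ i j, A i j ∈ I) ∧ sparsePattern G A

/-- The entrywise application `f_G[A]` of `f` to `A` according to the graph `G`. -/
noncomputable def applyG {n : ℕ} (G : SimpleGraph (Fin n)) (f : ℝ → ℝ)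
    (A : Matrix (Fin n) (Fin n) ℝ) : Matrix (Fin n) (Fin n) ℝ :=
  Matrix.of fun i j => if i = j ∨ G.Adj i j then f (A i j) else 0

/-!
The graphs are the stars `K_{1,n}` and `f(x) = x h(x²) = x + 4x³ - 4x⁵ + 4x⁷ + x⁹` with
`h(u) = (1 + u)⁴ - 10u²`.

A symmetric matrix supported on a star with centre `0`, diagonal `d₀, dᵢ` and off-diagonal
entries `cᵢ` is positive semidefinite as soon as `dᵢ ≥ 0` and there are `tᵢ ≥ 0` with
`∑ tᵢ ≤ d₀` and `cᵢ² ≤ tᵢ dᵢ`: the quadratic form splits into `(d₀ - ∑ tᵢ) x₀²` plus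
nonnegative binary forms. Conversely `tᵢ = cᵢ²/dᵢ` is such a certificate for any `A ⪰ 0`.
Writing `f(x) = x g(x)`, the rescaled certificate `g(d₀) tᵢ` then works for `f_G[A]` whenever
`g ≥ 0` and `g(c)² ≤ g(a) g(b)` for `c² ≤ ab`. For `g(x) = h(x²)` the latter holds because `h`
is increasing on `[0, ∞)` and `h(a²) h(b²) - h(ab)²` is `(a - b)²` times a polynomial in `ab`
and `(a - b)²` that is nonnegative on the nonnegative quadrant.
-/

open SimpleGraph Polynomial

theorem Polynomial.hasSum_coeff_mul_pow {R : Type*} [Semiring R] [TopologicalSpace R]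
    (p : R[X]) (x : R) :
    HasSum (fun k => p.coeff k * x ^ k) (p.eval x) := by
  rw [eval_eq_sum_range]
  exact hasSum_sum_of_ne_finset_zero fun k hk => by
    rw [coeff_eq_zero_of_natDegree_lt (by simpa [Nat.lt_succ_iff] using hk), zero_mul]

theorem Matrix.PosSemidef.sq_apply_le {ι : Type*} [Fintype ι] {A : Matrix ι ι ℝ}
    (hA : A.PosSemidef) (i j : ι) : A i j ^ 2 ≤ A i i * A j j := by
  have h := (hA.submatrix ![i, j]).det_nonneg
  rw [det_fin_two] at h
  have hji : A j i = A i j := hA.isHermitian.apply i j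
  simp [hji] at h
  nlinarith

section applyG

variable {n : ℕ} (G : SimpleGraph (Fin n)) (f : ℝ → ℝ) (A : Matrix (Fin n) (Fin n) ℝ)

@[simp]
theorem applyG_apply_self (i : Fin n) : applyG G f A i i = f (A i i) := by
  simp [applyG]

theorem applyG_apply_of_adj {i j : Fin n} (h : G.Adj i j) : applyG G f A i j = f (A i j) := by
  simp [applyG, h]

theorem sparsePattern_applyG : sparsePattern G (applyG G f A) := by
  intro i j hij hadj
  simp [applyG, hij, hadj]

theorem isSymm_applyG (hA : A.IsSymm) : (applyG G f A).IsSymm := by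
  ext i j
  simp only [transpose_apply, applyG, of_apply, eq_comm (a := j), G.adj_comm j i, hA.apply i j]

end applyG

theorem quadratic_nonneg_of_sq_le_mul {p q r : ℝ} (hp : 0 ≤ p) (hr : 0 ≤ r) (hq : q ^ 2 ≤ p * r)
    (a b : ℝ) : 0 ≤ p * a ^ 2 + 2 * q * a * b + r * b ^ 2 := by
  rcases hp.eq_or_lt with rfl | hp
  · obtain rfl : q = 0 := by nlinarith
    nlinarith
  · have : 0 ≤ p * (p * a ^ 2 + 2 * q * a * b + r * b ^ 2) := by
      nlinarith [sq_nonneg (p * a + q * b), mul_nonneg (sub_nonneg.2 hq) (sq_nonneg b)]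
    exact nonneg_of_mul_nonneg_right this hp

section Star

variable {n : ℕ}

theorem dotProduct_mulVec_of_sparsePattern_starGraph {B : Matrix (Fin (n + 1)) (Fin (n + 1)) ℝ}
    (hB : B.IsSymm) (hpat : sparsePattern (starGraph 0) B) (x : Fin (n + 1) → ℝ) :
    x ⬝ᵥ B *ᵥ x = B 0 0 * x 0 ^ 2 +
      ∑ i : Fin n, (2 * B 0 i.succ * x 0 * x i.succ + B i.succ i.succ * x i.succ ^ 2) := by
  have hleaf (i : Fin n) : ∑ j : Fin n, B i.succ j.succ * x j.succ = B i.succ i.succ * x i.succ :=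
    Fintype.sum_eq_single i fun j hji => by
      rw [hpat _ _ (by simpa using hji.symm) (by simp [hji.symm, Fin.succ_ne_zero]), zero_mul]
  simp only [dotProduct, mulVec, Fin.sum_univ_succ]
  simp only [hleaf, hB.apply 0, mul_add, Finset.mul_sum]
  rw [add_assoc, ← Finset.sum_add_distrib]
  congr 1
  · ring
  · exact Finset.sum_congr rfl fun i _ => by ring

theorem posSemidef_of_starGraph_certificate {B : Matrix (Fin (n + 1)) (Fin (n + 1)) ℝ}
    (hB : B.IsSymm) (hpat : sparsePattern (starGraph 0) B) (t : Fin n → ℝ) (ht : ∀ i, 0 ≤ t i)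
    (hsum : ∑ i, t i ≤ B 0 0) (hdiag : ∀ i : Fin n, 0 ≤ B i.succ i.succ)
    (hoff : ∀ i, B 0 i.succ ^ 2 ≤ t i * B i.succ i.succ) : B.PosSemidef := by
  refine .of_dotProduct_mulVec_nonneg (isHermitian_iff_isSymm.2 hB) fun x => ?_
  have hleaf (i : Fin n) :
      0 ≤ t i * x 0 ^ 2 + (2 * B 0 i.succ * x 0 * x i.succ + B i.succ i.succ * x i.succ ^ 2) := by
    have := quadratic_nonneg_of_sq_le_mul (ht i) (hdiag i) (hoff i) (x 0) (x i.succ)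
    linarith
  have hcenter : 0 ≤ (B 0 0 - ∑ i, t i) * x 0 ^ 2 := mul_nonneg (by linarith) (sq_nonneg _)
  rw [star_trivial, dotProduct_mulVec_of_sparsePattern_starGraph hB hpat]
  have := Finset.sum_nonneg fun i (_ : i ∈ Finset.univ) => hleaf i
  rw [Finset.sum_add_distrib, ← Finset.sum_mul] at this
  linarith

theorem sum_sq_div_le_of_posSemidef_starGraph {A : Matrix (Fin (n + 1)) (Fin (n + 1)) ℝ}
    (hA : A.PosSemidef) (hpat : sparsePattern (starGraph 0) A) :
    ∑ i : Fin n, A 0 i.succ ^ 2 / A i.succ i.succ ≤ A 0 0 := by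
  have hterm (c d : ℝ) : 2 * c * 1 * -(c / d) + d * (-(c / d)) ^ 2 = -(c ^ 2 / d) := by
    rcases eq_or_ne d 0 with rfl | hd
    · simp
    · field_simp
      ring
  -- where `dᵢ = 0`, `cᵢ / 0 = 0` kills both the test coordinate and the summand `cᵢ² / dᵢ`
  have h := hA.dotProduct_mulVec_nonneg (Fin.cons 1 fun i => -(A 0 i.succ / A i.succ i.succ))
  rw [star_trivial,
    dotProduct_mulVec_of_sparsePattern_starGraph (isHermitian_iff_isSymm.1 hA.1) hpat] at h
  simp only [Fin.cons_zero, Fin.cons_succ, hterm, Finset.sum_neg_distrib] at h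
  linarith

theorem memPG_applyG_starGraph (g : ℝ → ℝ) (hg_nonneg : ∀ x, 0 ≤ x → 0 ≤ g x)
    (hg : ∀ a b c, 0 ≤ a → 0 ≤ b → 0 ≤ c → c ^ 2 ≤ a * b → g c ^ 2 ≤ g a * g b)
    {A : Matrix (Fin (n + 1)) (Fin (n + 1)) ℝ} (hA : memPG (starGraph 0) (Set.Ici 0) A) :
    memPG (starGraph 0) Set.univ (applyG (starGraph 0) (fun x => x * g x) A) := by
  obtain ⟨hPSD, hA_mem, hpat⟩ := hA
  have hA_nonneg (i j) : 0 ≤ A i j := hA_mem i j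
  have hadj (i : Fin n) : (starGraph 0).Adj 0 i.succ :=
    starGraph_center_adj (Fin.succ_ne_zero i).symm
  refine ⟨?_, fun _ _ => trivial, sparsePattern_applyG _ _ _⟩
  refine posSemidef_of_starGraph_certificate
    (isSymm_applyG _ _ _ (isHermitian_iff_isSymm.1 hPSD.1)) (sparsePattern_applyG _ _ _)
    (fun i => g (A 0 0) * (A 0 i.succ ^ 2 / A i.succ i.succ))
    (fun i => mul_nonneg (hg_nonneg _ (hA_nonneg 0 0)) (div_nonneg (sq_nonneg _) (hA_nonneg _ _)))
    ?_ (fun i => ?_) fun i => ?_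
  · rw [applyG_apply_self, ← Finset.mul_sum, mul_comm (A 0 0)]
    exact mul_le_mul_of_nonneg_left (sum_sq_div_le_of_posSemidef_starGraph hPSD hpat)
      (hg_nonneg _ (hA_nonneg 0 0))
  · rw [applyG_apply_self]
    exact mul_nonneg (hA_nonneg _ _) (hg_nonneg _ (hA_nonneg _ _))
  · rw [applyG_apply_of_adj _ _ _ (hadj i), applyG_apply_self]
    have hc := hPSD.sq_apply_le 0 i.succ
    rcases eq_or_ne (A i.succ i.succ) 0 with hd | hd
    · obtain hc0 : A 0 i.succ = 0 := by simpa [hd] using hc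
      simp [hc0, hd]
    · calc (A 0 i.succ * g (A 0 i.succ)) ^ 2 = A 0 i.succ ^ 2 * g (A 0 i.succ) ^ 2 := by ring
        _ ≤ A 0 i.succ ^ 2 * (g (A 0 0) * g (A i.succ i.succ)) :=
          mul_le_mul_of_nonneg_left (hg _ _ _ (hA_nonneg _ _) (hA_nonneg _ _) (hA_nonneg _ _) hc)
            (sq_nonneg _)
        _ = _ := by field_simp

end Star

def quartic (u : ℝ) : ℝ := (1 + u) ^ 4 - 10 * u ^ 2

theorem quartic_nonneg {u : ℝ} (hu : 0 ≤ u) : 0 ≤ quartic u := by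
  have : quartic u = (1 - u ^ 2) ^ 2 + 4 * u * (1 - u) ^ 2 + 6 * u ^ 2 := by
    unfold quartic; ring
  rw [this]
  positivity

theorem quartic_monotoneOn : MonotoneOn quartic (Set.Ici 0) := by
  intro v (hv : 0 ≤ v) w (hw : 0 ≤ w) hvw
  have key : quartic w - quartic v = (w - v) *
      (4 - 4 * (w + v) + 3 * (w + v) ^ 2 + (w - v) ^ 2 + (w + v) * (w ^ 2 + v ^ 2)) := by
    unfold quartic; ring
  have : 0 ≤ 4 - 4 * (w + v) + 3 * (w + v) ^ 2 + (w - v) ^ 2 + (w + v) * (w ^ 2 + v ^ 2) := by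
    nlinarith [sq_nonneg (3 * (w + v) - 2), sq_nonneg (w - v),
      mul_nonneg (add_nonneg hv hw) (add_nonneg (sq_nonneg w) (sq_nonneg v))]
  linarith [mul_nonneg (sub_nonneg.2 hvw) this]

def quarticGap (W y : ℝ) : ℝ :=
  4 - 4 * y + 4 * y ^ 2 + y ^ 3 - 16 * W + 24 * W * y + 8 * W * y ^ 2 + 20 * W ^ 2
    + 36 * W ^ 2 * y + 4 * W ^ 2 * y ^ 2 + 80 * W ^ 3 + 24 * W ^ 3 * y + 20 * W ^ 4
    - 4 * W ^ 4 * y - 16 * W ^ 5 + 4 * W ^ 6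

theorem quarticGap_nonneg {W y : ℝ} (hW : 0 ≤ W) (hy : 0 ≤ y) : 0 ≤ quarticGap W y := by
  unfold quarticGap
  nlinarith [sq_nonneg (2 * W * y - W ^ 3 + 2 * W ^ 2), sq_nonneg (y - 1),
    sq_nonneg (W ^ 3 - 2 * W ^ 2), sq_nonneg (W ^ 2), mul_nonneg hW (sq_nonneg (4 * W - 1)),
    sq_nonneg (120 * W - 21), mul_nonneg hy hW, mul_nonneg (mul_nonneg hy hW) hW,
    mul_nonneg (mul_nonneg (mul_nonneg hy hW) hW) hW, mul_nonneg (mul_nonneg hy hy) hW,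
    mul_nonneg hy hy, mul_nonneg (mul_nonneg hy hy) hy]

theorem quartic_sq_mul_quartic_sq_sub (a b : ℝ) :
    quartic (a ^ 2) * quartic (b ^ 2) - quartic (a * b) ^ 2
      = (a - b) ^ 2 * quarticGap (a * b) ((a - b) ^ 2) := by
  unfold quartic quarticGap
  ring

theorem quartic_mul_sq_le {a b : ℝ} (ha : 0 ≤ a) (hb : 0 ≤ b) :
    quartic (a * b) ^ 2 ≤ quartic (a ^ 2) * quartic (b ^ 2) := by
  have := quartic_sq_mul_quartic_sq_sub a b
  have := mul_nonneg (sq_nonneg (a - b)) (quarticGap_nonneg (mul_nonneg ha hb) (sq_nonneg (a - b)))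
  linarith

theorem quartic_sq_sq_le {a b c : ℝ} (ha : 0 ≤ a) (hb : 0 ≤ b) (hc : c ^ 2 ≤ a * b) :
    quartic (c ^ 2) ^ 2 ≤ quartic (a ^ 2) * quartic (b ^ 2) := by
  have hmono : quartic (c ^ 2) ≤ quartic (a * b) :=
    quartic_monotoneOn (sq_nonneg c) (mul_nonneg ha hb) hc
  calc quartic (c ^ 2) ^ 2 ≤ quartic (a * b) ^ 2 :=
        pow_le_pow_left₀ (quartic_nonneg (sq_nonneg c)) hmono 2
    _ ≤ quartic (a ^ 2) * quartic (b ^ 2) := quartic_mul_sq_le ha hb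

noncomputable def starPreservingPoly : ℝ[X] := X + 4 * X ^ 3 - 4 * X ^ 5 + 4 * X ^ 7 + X ^ 9

theorem eval_starPreservingPoly (x : ℝ) : starPreservingPoly.eval x = x * quartic (x ^ 2) := by
  simp only [starPreservingPoly, quartic, eval_add, eval_sub, eval_mul, eval_pow, eval_X,
    eval_ofNat]
  ring

theorem coeff_starPreservingPoly_five : starPreservingPoly.coeff 5 = -4 := by
  simp [starPreservingPoly, coeff_X]

theorem ncard_neighborSet_starGraph_self {V : Type*} [Finite V] (r : V) :
    ((starGraph r).neighborSet r).ncard = Nat.card V - 1 := by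
  have : (starGraph r).neighborSet r = {r}ᶜ := by ext; simp [eq_comm]
  rw [this, Set.ncard_compl, Set.ncard_singleton]

theorem stmt2 :
    ∃ (V : ℕ → ℕ) (G : ∀ n : ℕ, SimpleGraph (Fin (V n))) (a : ℕ → ℝ),
      (∀ c : ℕ, ∃ n : ℕ, 1 ≤ n ∧ ∃ v : Fin (V n), c ≤ ((G n).neighborSet v).ncard) ∧
      (∀ x : ℝ, Summable fun k => a k * x ^ k) ∧
      (∃ k : ℕ, a k < 0) ∧
      (∀ n : ℕ, 1 ≤ n → ∀ A : Matrix (Fin (V n)) (Fin (V n)) ℝ,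
        memPG (G n) (Set.Ici 0) A →
          memPG (G n) Set.univ (applyG (G n) (fun x => ∑' k : ℕ, a k * x ^ k) A)) := by
  have hf : (fun x => ∑' k : ℕ, starPreservingPoly.coeff k * x ^ k)
      = fun x => x * quartic (x ^ 2) := funext fun x => by
    rw [(starPreservingPoly.hasSum_coeff_mul_pow x).tsum_eq, eval_starPreservingPoly]
  refine ⟨fun n => n + 1, fun n => starGraph 0, starPreservingPoly.coeff, fun c => ?_,
    fun x => (starPreservingPoly.hasSum_coeff_mul_pow x).summable,
    ⟨5, by rw [coeff_starPreservingPoly_five]; norm_num⟩, fun n _ A hA => ?_⟩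
  · exact ⟨c + 1, by omega, 0, by simp [ncard_neighborSet_starGraph_self]⟩
  · rw [hf]
    exact memPG_applyG_starGraph _ (fun x _ => quartic_nonneg (sq_nonneg x))
      (fun a b c ha hb _ hc => quartic_sq_sq_le ha hb hc) hA
end

section
/- Let G be a tree with n ≥ 3 vertices. (a) For every α ≥ 1 and every A ∈ P_G([0,∞)), the entrywise power A^{∘α} := (a_{ij}^α) belongs to P_G. (b) For every 0 < α < 1 and every 0 < R ≤ ∞, there exists a matrix A_R ∈ P_G([0,R)) such that A_R^{∘α} is not positive semidefinite. -/
open Matrix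
open scoped Classical ENNReal

/-!
(a) Induct on the forest `G`. If `u` is a leaf with neighbour `x`, split `A = B + C`, where
`C = (A u u)⁻¹ • c cᵀ` with `c` the row of `u` and `B` is the Schur complement at `u`. Then `B` is
positive semidefinite with zero row and column `u`, so it is sparse for `G` minus the edge `ux`;
`C` is supported on `{u, x}`. Off the diagonal at most one of `B`, `C` is nonzero, so
`(B + C)^∘α = B^∘α + C^∘α + D` with `D` diagonal and nonnegative by superadditivity of `t ↦ t ^ α`,
`B^∘α` is positive semidefinite by induction and `C^∘α` is again a nonnegative rank-one matrix.

(b) On a path `u - v - w`, the matrix with block `c • !![1, 1, 0; 1, 2, 1; 0, 1, 1]` is a sum of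
two rank-one matrices supported on edges, but the `α`-th power of that block has
quadratic form `c ^ α * (2 ^ α - 2) < 0` at `(1, -1, 1)`.
-/

namespace Matrix

variable {V : Type*}

theorem PosSemidef.apply_comm {A : Matrix V V ℝ} (hA : A.PosSemidef) (i j : V) :
    A i j = A j i := by
  simpa using (hA.isHermitian.apply i j).symm

theorem PosSemidef.apply_eq_zero_of_diag_eq_zero [Fintype V] [DecidableEq V]
    {A : Matrix V V ℝ} (hA : A.PosSemidef) {u : V} (hu : A u u = 0) (j : V) : A u j = 0 := by
  have h := (hA.dotProduct_mulVec_zero_iff (Pi.single u 1)).1 (by simpa using hu)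
  simpa [hA.apply_comm u j] using congrFun h j

/-- The Schur complement of the entry `A u u`, as a `V × V` matrix. Since `(0 : ℝ)⁻¹ = 0`, it is
`A` itself when `A u u = 0`. -/
noncomputable def schurCompl (A : Matrix V V ℝ) (u : V) : Matrix V V ℝ :=
  A - (A u u)⁻¹ • vecMulVec (A u) (A u)

theorem schurCompl_apply (A : Matrix V V ℝ) (u i j : V) :
    schurCompl A u i j = A i j - (A u u)⁻¹ * (A u i * A u j) := rfl

variable [Fintype V] [DecidableEq V]

theorem posSemidef_schurCompl {A : Matrix V V ℝ} (hA : A.PosSemidef) (u : V) :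
    (schurCompl A u).PosSemidef := by
  convert hA.conjTranspose_mul_mul_same (1 - (A u u)⁻¹ • vecMulVec (Pi.single u 1) (A u)) using 1
  ext i j
  simp [schurCompl_apply, Matrix.mul_apply, Pi.single_apply, Finset.sum_sub_distrib, mul_sub,
    sub_mul, vecMulVec_apply, Matrix.one_apply, hA.apply_comm i u]
  rcases eq_or_ne (A u u) 0 with h | h
  · simp [h]
  · field_simp
    ring

theorem PosSemidef.schurCompl_apply_self_left {A : Matrix V V ℝ} (hA : A.PosSemidef) (u j : V) :
    schurCompl A u u j = 0 := by
  rw [schurCompl_apply]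
  rcases eq_or_ne (A u u) 0 with h | h
  · simp [h, hA.apply_eq_zero_of_diag_eq_zero h]
  · field_simp
    ring

theorem PosSemidef.schurCompl_apply_eq_zero_or {A : Matrix V V ℝ} (hA : A.PosSemidef) {u x : V}
    (hrow : ∀ j, j ≠ u → j ≠ x → A u j = 0) {i j : V} (hij : i ≠ j) :
    schurCompl A u i j = 0 ∨ i ≠ u ∧ j ≠ u ∧ (A u i = 0 ∨ A u j = 0) := by
  by_cases hi : i = u
  · exact .inl (hi ▸ hA.schurCompl_apply_self_left u j)
  by_cases hj : j = u
  · left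
    rw [hj, (posSemidef_schurCompl hA u).apply_comm]
    exact hA.schurCompl_apply_self_left u i
  by_cases hix : i = x
  · exact .inr ⟨hi, hj, .inr (hrow j hj fun hjx => hij (hix.trans hjx.symm))⟩
  · exact .inr ⟨hi, hj, .inl (hrow i hi hix)⟩

omit [DecidableEq V] in
theorem posSemidef_smul_vecMulVec_map_rpow {r : ℝ} (hr : 0 ≤ r) {c : V → ℝ} (hc : 0 ≤ c)
    (α : ℝ) : ((r • vecMulVec c c).map (· ^ α)).PosSemidef := by
  have : (r • vecMulVec c c).map (· ^ α) = r ^ α • vecMulVec (c · ^ α) (c · ^ α) := by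
    ext i j
    simp [vecMulVec_apply, Real.mul_rpow hr (mul_nonneg (hc i) (hc j)),
      Real.mul_rpow (hc i) (hc j)]
  rw [this]
  exact (posSemidef_vecMulVec_self_star _).smul (Real.rpow_nonneg hr α)

omit [Fintype V] in
theorem posSemidef_map_rpow_of_forall_ne {α : ℝ} (hα : α ≠ 0) {A : Matrix V V ℝ}
    (hA : ∀ i j, i ≠ j → A i j = 0) (hA0 : ∀ i, 0 ≤ A i i) :
    (A.map (· ^ α)).PosSemidef := by
  have : A.map (· ^ α) = diagonal fun i => A i i ^ α := by
    ext i j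
    obtain rfl | hij := eq_or_ne i j
    · simp
    · simp [hA i j hij, hij, Real.zero_rpow hα]
  rw [this]
  exact PosSemidef.diagonal fun i => Real.rpow_nonneg (hA0 i) α

omit [Fintype V] in
theorem PosSemidef.map_rpow_add {α : ℝ} (hα : 1 ≤ α) {B C : Matrix V V ℝ}
    (hB : ∀ i j, 0 ≤ B i j) (hC : ∀ i j, 0 ≤ C i j)
    (hBC : ∀ i j, i ≠ j → B i j = 0 ∨ C i j = 0)
    (hBα : (B.map (· ^ α)).PosSemidef) (hCα : (C.map (· ^ α)).PosSemidef) :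
    ((B + C).map (· ^ α)).PosSemidef := by
  have hα0 : α ≠ 0 := by positivity
  have hsplit : (B + C).map (· ^ α) = B.map (· ^ α) + C.map (· ^ α) +
      diagonal fun i => (B i i + C i i) ^ α - B i i ^ α - C i i ^ α := by
    ext i j
    obtain rfl | hij := eq_or_ne i j
    · simp
    · rcases hBC i j hij with h | h <;> simp [h, hij, Real.zero_rpow hα0]
  rw [hsplit]
  refine (hBα.add hCα).add (PosSemidef.diagonal fun i => show (0 : ℝ) ≤ _ from ?_)
  rw [sub_sub, sub_nonneg]
  exact Real.add_rpow_le_rpow_add (hB i i) (hC i i) hα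

end Matrix

namespace SimpleGraph

variable {V : Type*} {G : SimpleGraph V}

theorem IsAcyclic.exists_adj_forall_adj_eq [Finite V] (hG : G.IsAcyclic) {a b : V}
    (hab : G.Adj a b) : ∃ u x, G.Adj u x ∧ ∀ w, G.Adj u w → w = x := by
  have : Nonempty V := ⟨a⟩
  obtain ⟨u, v, p, hp, hmax⟩ := Walk.exists_isPath_forall_isPath_length_le_length G
  have hnil : ¬p.Nil := fun h => by
    simpa [h.length_eq_zero] using hmax a b _ (Path.singleton hab).2
  refine ⟨u, p.snd, p.adj_snd hnil, fun w hw => hG.eq_snd_of_adj_start hp hw ?_⟩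
  by_contra hwp
  simpa using hmax w v _ (hp.cons hwp (h := hw.symm))

theorem IsTree.exists_adj_adj_ne [Fintype V] (hG : G.IsTree) (hV : 3 ≤ Fintype.card V) :
    ∃ u v w, G.Adj u v ∧ G.Adj v w ∧ u ≠ w := by
  by_contra! h
  have hdeg : ∀ v, G.degree v ≤ 1 := fun v =>
    Finset.card_le_one.2 fun a ha b hb =>
      h a v b ((mem_neighborFinset _ _ _).1 ha).symm ((mem_neighborFinset _ _ _).1 hb)
  have hsum := G.sum_degrees_eq_twice_card_edges
  have hcard := hG.card_edgeFinset
  have : ∑ v, G.degree v ≤ Fintype.card V := by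
    simpa using Finset.sum_le_sum fun v (_ : v ∈ Finset.univ) => hdeg v
  omega

variable [Fintype V] [DecidableEq V]

theorem IsAcyclic.posSemidef_map_rpow (hG : G.IsAcyclic) {A : Matrix V V ℝ} (hA : A.PosSemidef)
    (hA0 : ∀ i j, 0 ≤ A i j) (hAG : ∀ i j, i ≠ j → ¬G.Adj i j → A i j = 0) {α : ℝ}
    (hα : 1 ≤ α) : (A.map (· ^ α)).PosSemidef := by
  induction G using WellFoundedLT.induction generalizing A with
  | _ G ih =>
  by_cases hbot : G = ⊥
  · exact posSemidef_map_rpow_of_forall_ne (by positivity)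
      (fun i j hij => hAG i j hij (by simp [hbot])) fun i => hA.diag_nonneg
  obtain ⟨a, b, hab⟩ := ne_bot_iff_exists_adj.1 hbot
  obtain ⟨u, x, hux, hleaf⟩ := hG.exists_adj_forall_adj_eq hab
  set G' := G.deleteEdges {s(u, x)}
  set C := (A u u)⁻¹ • vecMulVec (A u) (A u)
  set B := schurCompl A u
  have hB : B.PosSemidef := posSemidef_schurCompl hA u
  have hrow : ∀ j, j ≠ u → j ≠ x → A u j = 0 := fun j hju hjx =>
    hAG u j (Ne.symm hju) fun h => hjx (hleaf j h)
  have hoff : ∀ i j, i ≠ j →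
      B i j = 0 ∨ (C i j = 0 ∧ B i j = A i j ∧ (G'.Adj i j ↔ G.Adj i j)) := by
    intro i j hij
    refine (hA.schurCompl_apply_eq_zero_or hrow hij).imp_right fun ⟨hi, hj, h⟩ => ?_
    have hC : C i j = 0 := by rcases h with h | h <;> simp [C, vecMulVec_apply, h]
    exact ⟨hC, show A i j - C i j = A i j by rw [hC, sub_zero], by simp [G', hi, hj]⟩
  have hB0 : ∀ i j, 0 ≤ B i j := by
    intro i j
    obtain rfl | hij := eq_or_ne i j
    · exact hB.diag_nonneg
    rcases hoff i j hij with h | ⟨-, h, -⟩ <;> simp [h, hA0]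
  have hBG : ∀ i j, i ≠ j → ¬G'.Adj i j → B i j = 0 := by
    intro i j hij hG'
    rcases hoff i j hij with h | ⟨-, h, hadj⟩
    · exact h
    · exact h.trans (hAG i j hij (hadj.not.1 hG'))
  have hlt : G' < G := (deleteEdges_le _).lt_of_ne fun h => by
    rw [← h] at hux
    simp at hux
  have hC0 : ∀ i j, 0 ≤ C i j := fun i j =>
    mul_nonneg (inv_nonneg.2 hA.diag_nonneg) (mul_nonneg (hA0 u i) (hA0 u j))
  rw [← sub_add_cancel A C]
  exact PosSemidef.map_rpow_add hα hB0 hC0 (fun i j hij => (hoff i j hij).imp_right (·.1))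
    (ih G' hlt (hG.anti (deleteEdges_le _)) hB hB0 hBG)
    (posSemidef_smul_vecMulVec_map_rpow (inv_nonneg.2 hA.diag_nonneg) (hA0 u) α)

theorem exists_posSemidef_map_rpow_not_posSemidef {u v w : V} (huv : G.Adj u v)
    (hvw : G.Adj v w) (huw : u ≠ w) {α : ℝ} (hα0 : 0 < α) (hα1 : α < 1) {ε : ℝ} (hε : 0 < ε) :
    ∃ A : Matrix V V ℝ, A.PosSemidef ∧ (∀ i j, 0 ≤ A i j ∧ A i j ≤ ε) ∧
      (∀ i j, i ≠ j → ¬G.Adj i j → A i j = 0) ∧ ¬(A.map (· ^ α)).PosSemidef := by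
  set p : V → V → V → ℝ := fun a b i => if i = a ∨ i = b then 1 else 0
  have hp : ∀ a b, (vecMulVec (p a b) (p a b)).PosSemidef := fun a b => by
    simpa using posSemidef_vecMulVec_self_star (p a b)
  have hp01 : ∀ a b i, 0 ≤ p a b i ∧ p a b i ≤ 1 := by
    intro a b i
    simp only [p]
    split_ifs <;> norm_num
  have hpG : ∀ a b, G.Adj a b → ∀ i j, i ≠ j → ¬G.Adj i j → p a b i * p a b j = 0 := by
    intro a b hab i j hij hG
    simp only [p, mul_ite, ite_mul, one_mul, mul_zero, zero_mul]
    split_ifs with hj hi <;> try rfl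
    rcases hi with rfl | rfl <;> rcases hj with rfl | rfl <;> simp_all [hab.symm]
  set c := ε / 2 with hc
  have hc0 : 0 < c := by positivity
  refine ⟨c • (vecMulVec (p u v) (p u v) + vecMulVec (p v w) (p v w)),
    ((hp u v).add (hp v w)).smul hc0.le, fun i j => ?_, fun i j hij hG => ?_, fun h => ?_⟩
  · obtain ⟨h1, h2⟩ := hp01 u v i
    obtain ⟨h3, h4⟩ := hp01 u v j
    obtain ⟨h5, h6⟩ := hp01 v w i
    obtain ⟨h7, h8⟩ := hp01 v w j
    simp only [Matrix.smul_apply, Matrix.add_apply, vecMulVec_apply, smul_eq_mul]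
    constructor
    · positivity
    · nlinarith [mul_le_one₀ h2 h3 h4, mul_le_one₀ h6 h7 h8]
  · simp [vecMulVec_apply, hpG u v huv i j hij hG, hpG v w hvw i j hij hG]
  · have := (h.submatrix ![u, v, w]).dotProduct_mulVec_nonneg ![1, -1, 1]
    simp [dotProduct, mulVec, Fin.sum_univ_three, p, vecMulVec_apply, huv.ne, hvw.ne, huv.ne',
      hvw.ne', huw, huw.symm, Real.zero_rpow hα0.ne', ← two_mul] at this
    rw [Real.mul_rpow zero_le_two hc0.le] at this
    have h2 : (2 : ℝ) ^ α < 2 := by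
      simpa using Real.rpow_lt_rpow_of_exponent_lt one_lt_two hα1
    have hcα : 0 < c ^ α := by positivity
    nlinarith

end SimpleGraph

theorem stmt11 {n : ℕ} (hn : 3 ≤ n) (G : SimpleGraph (Fin n)) (hG : G.IsTree) :
    (∀ α : ℝ, 1 ≤ α → ∀ A : Matrix (Fin n) (Fin n) ℝ, memPG G (Set.Ici 0) A →
      memPG G Set.univ (Matrix.of fun i j => A i j ^ α)) ∧
    (∀ α : ℝ, 0 < α → α < 1 → ∀ R : ℝ≥0∞, 0 < R →
      ∃ A : Matrix (Fin n) (Fin n) ℝ,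
        memPG G {x : ℝ | 0 ≤ x ∧ ENNReal.ofReal x < R} A ∧
        ¬ (Matrix.of fun i j => A i j ^ α : Matrix (Fin n) (Fin n) ℝ).PosSemidef) := by
  refine ⟨fun α hα A ⟨hA, hA0, hAG⟩ => ⟨hG.isAcyclic.posSemidef_map_rpow hA hA0 hAG hα,
    fun _ _ => trivial, fun i j hij hGij => ?_⟩, fun α hα0 hα1 R hR => ?_⟩
  · simp [hAG i j hij hGij, Real.zero_rpow (by positivity : α ≠ 0)]
  obtain ⟨u, v, w, huv, hvw, huw⟩ := hG.exists_adj_adj_ne (by simpa using hn)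
  obtain ⟨ε, -, hε0, hεR⟩ := ENNReal.lt_iff_exists_real_btwn.1 hR
  obtain ⟨A, hA, hAε, hAG, hAα⟩ :=
    SimpleGraph.exists_posSemidef_map_rpow_not_posSemidef huv hvw huw hα0 hα1 (ENNReal.ofReal_pos.1 hε0)
  exact ⟨A, ⟨hA, fun i j => ⟨(hAε i j).1,
    (ENNReal.ofReal_le_ofReal (hAε i j).2).trans_lt hεR⟩, hAG⟩, hAα⟩
end
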